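/- arXiv:1608.01921 — 5 statements merged into one kernel-verified Lean document; each statement's English description precedes it below -/
import Mathlib

section
/- Let P₁, …, P_m ⊂ ℝ^d be m point sets and let q₁, …, q_m ∈ ℝ^{m−1} be defined by q_i = e_i (the i-th standard basis vector) for i ∈ [m−1] and q_m = −(1,…,1). For each i define the lifted set P̂_i = { (p,1) ⊗ q_i : p ∈ P_i } ⊂ ℝ^{(d+1)(m−1)}, where ⊗ denotes the tensor product stacking (q)_j·(p,1) for j = 1,…,m−1. Then the intersection ⋂_{i=1}^m conv(P_i) is nonempty if and only if the origin lies in conv(⋃_{i=1}^m P̂_i). -/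
open Finset

/-- The coefficient vectors `q_i`. -/
def sarkQ (n : ℕ) (i : Fin (n + 1)) (j : Fin n) : ℝ :=
  if (i : ℕ) < n then (if (i : ℕ) = (j : ℕ) then 1 else 0) else -1

/-- The tensor lift. -/
def sarkT (n d : ℕ) (i : Fin (n + 1)) (p : Fin d → ℝ) : Fin n → Fin (d + 1) → ℝ :=
  fun j k => sarkQ n i j * (Fin.snoc p 1 : Fin (d + 1) → ℝ) k

lemma sarkQ_castSucc (n : ℕ) (j' j : Fin n) :
    sarkQ n j'.castSucc j = if j' = j then 1 else 0 := by
  simp [sarkQ, Fin.coe_castSucc, j'.is_lt, Fin.val_eq_val]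

lemma sarkQ_last (n : ℕ) (j : Fin n) : sarkQ n (Fin.last n) j = -1 := by
  simp [sarkQ]

lemma sarkQ_sum (n : ℕ) (j : Fin n) : ∑ i : Fin (n + 1), sarkQ n i j = 0 := by
  rw [Fin.sum_univ_castSucc]
  simp only [sarkQ_castSucc, sarkQ_last]
  rw [Finset.sum_ite_eq' Finset.univ j (fun _ => (1 : ℝ))]
  simp

lemma sark_snoc_comb {d : ℕ} {α : Type} (t : Finset α) (w : α → ℝ) (z : α → Fin d → ℝ)
    (hw1 : ∑ a ∈ t, w a = 1) (x : Fin d → ℝ) (hx : ∑ a ∈ t, w a • z a = x) (k : Fin (d + 1)) :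
    ∑ a ∈ t, w a * (Fin.snoc (z a) 1 : Fin (d + 1) → ℝ) k = (Fin.snoc x 1 : Fin (d + 1) → ℝ) k := by
  induction k using Fin.lastCases with
  | last => simpa [Fin.snoc_last] using hw1
  | cast k' =>
    simp only [Fin.snoc_castSucc]
    have := congrFun hx k'
    simpa [Finset.sum_apply, Pi.smul_apply, smul_eq_mul] using this

lemma sarkT_comb {n d : ℕ} {α : Type} (t : Finset α) (w : α → ℝ) (z : α → Fin d → ℝ)
    (hw1 : ∑ a ∈ t, w a = 1) (i : Fin (n + 1)) (x : Fin d → ℝ)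
    (hx : ∑ a ∈ t, w a • z a = x) :
    ∑ a ∈ t, w a • sarkT n d i (z a) = sarkT n d i x := by
  funext j k
  simp only [Finset.sum_apply, Pi.smul_apply, smul_eq_mul, sarkT]
  calc ∑ a ∈ t, w a * (sarkQ n i j * (Fin.snoc (z a) 1 : Fin (d + 1) → ℝ) k)
      = sarkQ n i j * ∑ a ∈ t, w a * (Fin.snoc (z a) 1 : Fin (d + 1) → ℝ) k := by
        rw [Finset.mul_sum]; exact Finset.sum_congr rfl fun a _ => by ring
    _ = sarkQ n i j * (Fin.snoc x 1 : Fin (d + 1) → ℝ) k := by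
        rw [sark_snoc_comb t w z hw1 x hx k]

/-- The backward direction of Sarkaria's lemma, index-type free version. -/
lemma sark_backward {n d : ℕ} {α : Type} (t : Finset α) (w : α → ℝ) (f : α → Fin (n + 1))
    (p : α → Fin d → ℝ) (P : Fin (n + 1) → Set (Fin d → ℝ))
    (hw0 : ∀ a ∈ t, 0 ≤ w a) (hw1 : ∑ a ∈ t, w a = 1)
    (hp : ∀ a ∈ t, p a ∈ P (f a))
    (hsum : ∑ a ∈ t, w a • sarkT n d (f a) (p a) = 0) :
    (⋂ i, convexHull ℝ (P i)).Nonempty := by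
  set y : Fin (n + 1) → Fin (d + 1) → ℝ :=
    fun i k => ∑ a ∈ t.filter (fun a => f a = i), w a * (Fin.snoc (p a) 1 : Fin (d + 1) → ℝ) k
    with hy_def
  have hkey : ∀ (j : Fin n) (k : Fin (d + 1)), ∑ i : Fin (n + 1), sarkQ n i j * y i k = 0 := by
    intro j k
    have h1 : ∑ a ∈ t, w a * (sarkQ n (f a) j * (Fin.snoc (p a) 1 : Fin (d + 1) → ℝ) k) = 0 := by
      have := congrFun (congrFun hsum j) k
      simpa [Finset.sum_apply, Pi.smul_apply, smul_eq_mul, sarkT] using this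
    rw [← h1, ← Finset.sum_fiberwise t f
      (fun a => w a * (sarkQ n (f a) j * (Fin.snoc (p a) 1 : Fin (d + 1) → ℝ) k))]
    refine Finset.sum_congr rfl fun i _ => ?_
    rw [hy_def]
    rw [Finset.mul_sum]
    refine Finset.sum_congr rfl fun a ha => ?_
    have hfa : f a = i := (Finset.mem_filter.1 ha).2
    rw [hfa]; ring
  have hy_eq : ∀ (i : Fin (n + 1)) (k : Fin (d + 1)), y i k = y (Fin.last n) k := by
    intro i k
    induction i using Fin.lastCases with
    | last => rfl
    | cast j =>
      have h := hkey j k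
      rw [Fin.sum_univ_castSucc] at h
      simp only [sarkQ_castSucc, sarkQ_last, ite_mul, one_mul, zero_mul] at h
      rw [Finset.sum_ite_eq' Finset.univ j (fun j' => y j'.castSucc k)] at h
      simp only [Finset.mem_univ, if_true] at h
      linarith
  have hlam : ∀ i : Fin (n + 1), y i (Fin.last d) = ∑ a ∈ t.filter (fun a => f a = i), w a := by
    intro i
    rw [hy_def]
    simp [Fin.snoc_last]
  have hlamsum : ∑ i : Fin (n + 1), y i (Fin.last d) = 1 := by
    rw [Finset.sum_congr rfl fun i _ => hlam i]
    rw [Finset.sum_fiberwise t f w]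
    exact hw1
  set c : ℝ := y (Fin.last n) (Fin.last d) with hc_def
  have hc1 : ((n : ℝ) + 1) * c = 1 := by
    rw [Finset.sum_congr rfl fun i _ => hy_eq i (Fin.last d)] at hlamsum
    simpa [Finset.sum_const, Finset.card_univ, nsmul_eq_mul, mul_comm] using hlamsum
  have hn1 : (0 : ℝ) < (n : ℝ) + 1 := by positivity
  have hcpos : 0 < c := by nlinarith
  refine ⟨fun k' => c⁻¹ * y (Fin.last n) k'.castSucc, Set.mem_iInter.2 fun i => ?_⟩
  have hwc : ∑ a ∈ t.filter (fun a => f a = i), w a = c := by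
    rw [← hlam i, hy_eq i (Fin.last d)]
  have hpos : 0 < ∑ a ∈ t.filter (fun a => f a = i), w a := by rw [hwc]; exact hcpos
  have hmemP : ∀ a ∈ t.filter (fun a => f a = i), p a ∈ P i := by
    intro a ha
    have hfa : f a = i := (Finset.mem_filter.1 ha).2
    rw [← hfa]; exact hp a (Finset.mem_filter.1 ha).1
  have hmem := Finset.centerMass_mem_convexHull (t.filter (fun a => f a = i))
    (fun a ha => hw0 a (Finset.mem_filter.1 ha).1) hpos hmemP
  have heq : (t.filter (fun a => f a = i)).centerMass w p
      = fun k' => c⁻¹ * y (Fin.last n) k'.castSucc := by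
    funext k'
    rw [Finset.centerMass, hwc]
    simp only [Pi.smul_apply, smul_eq_mul, Finset.sum_apply]
    congr 1
    rw [← hy_eq i k'.castSucc, hy_def]
    simp [Fin.snoc_castSucc]
  rw [heq] at hmem
  exact hmem

/-- Sarkaria's lemma.  Here `ℝ^{(d+1)(m-1)}` is modelled as `Fin (m-1) → Fin (d+1) → ℝ`
(the `j`-th block of `d+1` coordinates being the `j`-th component function), the lift
`(p,1)` of `p : Fin d → ℝ` is `Fin.snoc p 1`, and the tensor `(p,1) ⊗ q_i` is the
function `j ↦ (q_i)_j • (p,1)`, where `q_i = e_i` for `i < m-1` and `q_m = -(1,…,1)`. -/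
theorem sarkaria (d m : ℕ) (hm : 1 ≤ m) (P : Fin m → Set (Fin d → ℝ)) :
    (⋂ i, convexHull ℝ (P i)).Nonempty ↔
      (0 : Fin (m - 1) → Fin (d + 1) → ℝ) ∈ convexHull ℝ
        (⋃ i : Fin m,
          (fun p : Fin d → ℝ => fun (j : Fin (m - 1)) (k : Fin (d + 1)) =>
            (if (i : ℕ) < m - 1 then (if (i : ℕ) = (j : ℕ) then (1 : ℝ) else 0) else -1) *
              (Fin.snoc p (1 : ℝ) : Fin (d + 1) → ℝ) k) '' P i) := by
  obtain ⟨n, rfl⟩ : ∃ n, m = n + 1 := ⟨m - 1, (Nat.succ_pred_eq_of_pos hm).symm⟩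
  show (⋂ i, convexHull ℝ (P i)).Nonempty ↔
      (0 : Fin n → Fin (d + 1) → ℝ) ∈ convexHull ℝ (⋃ i : Fin (n + 1), sarkT n d i '' P i)
  constructor
  · rintro ⟨x, hx⟩
    rw [Set.mem_iInter] at hx
    have hmem : ∀ i : Fin (n + 1),
        sarkT n d i x ∈ convexHull ℝ (⋃ i' : Fin (n + 1), sarkT n d i' '' P i') := by
      intro i
      have hxi := hx i
      rw [_root_.convexHull_eq] at hxi
      obtain ⟨ι, t, w, z, hw0, hw1, hz, hcm⟩ := hxi
      have hsum : ∑ a ∈ t, w a • z a = x := by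
        rwa [Finset.centerMass_eq_of_sum_1 _ _ hw1] at hcm
      rw [← sarkT_comb t w z hw1 i x hsum]
      refine Convex.sum_mem (convex_convexHull ℝ _) hw0 hw1 fun a ha => ?_
      exact subset_convexHull ℝ _ (Set.mem_iUnion.2 ⟨i, Set.mem_image_of_mem _ (hz a ha)⟩)
    have h0 : (0 : Fin n → Fin (d + 1) → ℝ)
        = ∑ i : Fin (n + 1), ((n : ℝ) + 1)⁻¹ • sarkT n d i x := by
      funext j k
      simp only [Finset.sum_apply, Pi.smul_apply, smul_eq_mul, sarkT, Pi.zero_apply]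
      symm
      calc ∑ i : Fin (n + 1), ((n : ℝ) + 1)⁻¹ * (sarkQ n i j * (Fin.snoc x 1 : Fin (d+1) → ℝ) k)
          = (∑ i : Fin (n + 1), sarkQ n i j) * (((n : ℝ) + 1)⁻¹ * (Fin.snoc x 1 : Fin (d+1) → ℝ) k) := by
            rw [Finset.sum_mul]; exact Finset.sum_congr rfl fun i _ => by ring
        _ = 0 := by rw [sarkQ_sum]; ring
    rw [h0]
    have hn1 : ((n : ℝ) + 1) ≠ 0 := by positivity
    refine Convex.sum_mem (convex_convexHull ℝ _) (fun i _ => by positivity) ?_ fun i _ => hmem i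
    simp [Finset.sum_const, Finset.card_univ, nsmul_eq_mul]
    field_simp
  · intro h0
    rw [_root_.convexHull_eq] at h0
    obtain ⟨ι, t, w, z, hw0, hw1, hz, hcm⟩ := h0
    have hsum : ∑ a ∈ t, w a • z a = 0 := by
      rwa [Finset.centerMass_eq_of_sum_1 _ _ hw1] at hcm
    have hz' : ∀ a : {a // a ∈ t}, ∃ i, ∃ p ∈ P i, sarkT n d i p = z a.1 := by
      intro a
      have := hz a.1 a.2
      simpa [Set.mem_iUnion] using this
    choose f p hp hfp using hz'
    refine sark_backward t.attach (fun a => w a.1) f p P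
      (fun a _ => hw0 a.1 a.2) ?_ (fun a _ => hp a) ?_
    · rw [Finset.sum_attach t w]; exact hw1
    · have : ∑ a ∈ t.attach, (fun a : {a // a ∈ t} => w a.1 • z a.1) a
          = ∑ a ∈ t, w a • z a := Finset.sum_attach t (fun a => w a • z a)
      rw [← hsum]
      calc ∑ a ∈ t.attach, w a.1 • sarkT n d (f a) (p a)
          = ∑ a ∈ t.attach, w a.1 • z a.1 := by
            exact Finset.sum_congr rfl fun a _ => by rw [hfp a]
        _ = ∑ a ∈ t, w a • z a := Finset.sum_attach t (fun a => w a • z a)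
end

section
/- Let C₁, …, C_{d+1} ⊂ ℝ^d be point sets each containing the origin in its convex hull. Then there exists a colorful choice C = {c₁, …, c_{d+1}} with c_i ∈ C_i for each i such that the origin lies in conv(C). -/
/-!
Bárány's argument. Reduce to finite colour classes and to a Euclidean space. Among the finitely
many colourful choices, take a point `x` of least norm in the union of their convex hulls,
lying in the hull of the choice `c`. If `x ≠ 0`, every `c i` lies in the half-space
`⟪x, ·⟫ ≥ ‖x‖²`, so `x` is a convex combination of affinely independent points of `c` on the
hyperplane `⟪x, ·⟫ = ‖x‖²`; as this hyperplane misses the origin they are linearly independent,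
hence at most `d` of them, and some colour `j` is not needed. Since `0` lies in the hull of
`C j`, some `y ∈ C j` has `⟪x, y⟫ ≤ 0`; replacing `c j` by `y` puts the segment `[x, y]` in the
new hull, and that segment contains points closer to `0` than `x`.
-/

open Set Module Function
open scoped RealInnerProductSpace

theorem AffineIndependent.linearIndependent_of_apply_eq {k V ι : Type*} [Ring k]
    [NoZeroDivisors k] [AddCommGroup V] [Module k V] {p : ι → V} (hp : AffineIndependent k p)
    (f : V →ₗ[k] k) {r : k} (hr : r ≠ 0) (hf : ∀ i, f (p i) = r) : LinearIndependent k p := by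
  rw [linearIndependent_iff']
  intro s g hg
  have hsum : ∑ i ∈ s, g i = 0 := by
    have := congrArg f hg
    simp only [map_sum, map_smul, hf, smul_eq_mul, ← Finset.sum_mul, map_zero] at this
    exact (mul_eq_zero.1 this).resolve_right hr
  exact hp s g hsum (by rw [s.weightedVSub_eq_linear_combination hsum, hg])

theorem exists_le_zero_of_zero_mem_convexHull {V : Type*} [AddCommGroup V] [Module ℝ V]
    {s : Set V} (h : 0 ∈ convexHull ℝ s) (f : V →ₗ[ℝ] ℝ) : ∃ y ∈ s, f y ≤ 0 := by
  by_contra! hpos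
  have h0 : (0 : V) ∈ {y | 0 < f y} := convexHull_min hpos (convex_halfSpace_gt f.isLinear 0) h
  simp at h0

theorem exists_finset_card_le_finrank_of_mem_convexHull {V : Type*} [AddCommGroup V]
    [Module ℝ V] [FiniteDimensional ℝ V] {s : Set V} {x : V} (hx : x ∈ convexHull ℝ s)
    (f : V →ₗ[ℝ] ℝ) (hfx : f x ≠ 0) (hf : ∀ y ∈ s, f x ≤ f y) :
    ∃ t : Finset V, ↑t ⊆ s ∧ t.card ≤ finrank ℝ V ∧ x ∈ convexHull ℝ ↑t := by
  classical
  obtain ⟨ι, _, z, w, hzs, hz, hw0, hw1, hwx⟩ := eq_pos_convex_span_of_mem_convexHull hx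
  have hfz : ∀ i, f (z i) = f x := by
    have hsum : ∑ i, w i * (f (z i) - f x) = 0 := by
      simp only [mul_sub, Finset.sum_sub_distrib, ← Finset.sum_mul, hw1, one_mul, ← hwx,
        map_sum, map_smul, smul_eq_mul, sub_self]
    intro i
    have := (Finset.sum_eq_zero_iff_of_nonneg fun i _ => mul_nonneg (hw0 i).le
      (sub_nonneg.2 (hf _ (hzs (mem_range_self i))))).1 hsum i (Finset.mem_univ i)
    exact sub_eq_zero.1 ((mul_eq_zero.1 this).resolve_left (hw0 i).ne')
  have hli := hz.linearIndependent_of_apply_eq f hfx hfz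
  refine ⟨Finset.univ.image z, by simpa using hzs,
    Finset.card_image_le.trans (by simpa using hli.fintype_card_le_finrank), ?_⟩
  rw [Finset.coe_image, Finset.coe_univ, image_univ, ← hwx]
  exact (convex_convexHull ℝ _).sum_mem (fun i _ => (hw0 i).le) hw1
    (fun i _ => subset_convexHull ℝ _ (mem_range_self i))

theorem exists_subset_image_compl_singleton {α ι : Type*} [Fintype ι] {c : ι → α} {t : Finset α}
    (ht : ↑t ⊆ range c) (hcard : t.card < Fintype.card ι) : ∃ j, ↑t ⊆ c '' {j}ᶜ := by
  choose g hg using fun y : t => ht y.2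
  obtain ⟨j, hj⟩ : ∃ j, j ∉ range g := by
    by_contra! hall
    have := Fintype.card_le_of_surjective g hall
    simp only [Fintype.card_coe] at this
    omega
  exact ⟨j, fun y hy => ⟨g ⟨y, hy⟩, fun h => hj ⟨_, h⟩, hg _⟩⟩

theorem zero_mem_convexHull_image {V W : Type*} [AddCommGroup V] [Module ℝ V] [AddCommGroup W]
    [Module ℝ W] (f : V →ₗ[ℝ] W) {s : Set V} (h : 0 ∈ convexHull ℝ s) :
    0 ∈ convexHull ℝ (f '' s) := by
  rw [← f.image_convexHull]
  exact ⟨0, h, map_zero f⟩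

section InnerProductSpace

variable {E : Type*} [NormedAddCommGroup E] [InnerProductSpace ℝ E]

theorem exists_mem_segment_norm_lt {x y : E} (h : ⟪x, y - x⟫ < 0) :
    ∃ z ∈ segment ℝ x y, ‖z‖ < ‖x‖ := by
  have hyx : 0 < ‖y - x‖ ^ 2 := by
    have : y - x ≠ 0 := by rintro h0; simp [h0] at h
    positivity
  -- `t ≤ -⟪x, y - x⟫ / ‖y - x‖²` makes `2 t ⟪x, y - x⟫ + t² ‖y - x‖² ≤ t ⟪x, y - x⟫ < 0`.
  set t := min 1 (-⟪x, y - x⟫ / ‖y - x‖ ^ 2)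
  have ht0 : 0 < t := lt_min one_pos (div_pos (neg_pos.2 h) hyx)
  have htb : t * ‖y - x‖ ^ 2 ≤ -⟪x, y - x⟫ := (le_div_iff₀ hyx).1 (min_le_right _ _)
  refine ⟨x + t • (y - x), segment_eq_image' ℝ x y ▸ ⟨t, ⟨ht0.le, min_le_left _ _⟩, rfl⟩, ?_⟩
  refine lt_of_pow_lt_pow_left₀ 2 (norm_nonneg x) ?_
  rw [norm_add_sq_real, real_inner_smul_right, norm_smul, mul_pow, Real.norm_eq_abs, sq_abs]
  nlinarith

theorem IsMinOn.inner_self_le_inner {K : Set E} (hK : Convex ℝ K) {x w : E} (hx : x ∈ K)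
    (hmin : IsMinOn (‖·‖) K x) (hw : w ∈ K) : ⟪x, x⟫ ≤ ⟪x, w⟫ := by
  by_contra! hlt
  obtain ⟨z, hz, hzx⟩ := exists_mem_segment_norm_lt (x := x) (y := w)
    (by rw [inner_sub_right]; linarith)
  exact (isMinOn_iff.1 hmin z (hK.segment_subset hx hw hz)).not_gt hzx

variable [FiniteDimensional ℝ E] {ι : Type*} [Fintype ι]

theorem exists_update_mem_convexHull_norm_lt [DecidableEq ι] (hι : finrank ℝ E < Fintype.card ι)
    {C : ι → Set E} (hC : ∀ i, 0 ∈ convexHull ℝ (C i)) {c : ι → E} {x : E}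
    (hx : x ∈ convexHull ℝ (range c)) (hx0 : x ≠ 0) (hc : ∀ i, ⟪x, x⟫ ≤ ⟪x, c i⟫) :
    ∃ j, ∃ y ∈ C j, ∃ z ∈ convexHull ℝ (range (update c j y)), ‖z‖ < ‖x‖ := by
  obtain ⟨t, htc, htcard, hxt⟩ := exists_finset_card_le_finrank_of_mem_convexHull hx
    (innerₛₗ ℝ x) (inner_self_ne_zero.2 hx0) (forall_mem_range.2 hc)
  obtain ⟨j, htj⟩ := exists_subset_image_compl_singleton htc (htcard.trans_lt hι)
  obtain ⟨y, hyC, hy⟩ := exists_le_zero_of_zero_mem_convexHull (hC j) (innerₛₗ ℝ x)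
  have hcy : c '' {j}ᶜ ⊆ range (update c j y) := by
    rintro _ ⟨i, hi, rfl⟩
    exact ⟨i, update_of_ne hi _ _⟩
  have hxK : x ∈ convexHull ℝ (range (update c j y)) := convexHull_mono (htj.trans hcy) hxt
  have hyK : y ∈ convexHull ℝ (range (update c j y)) :=
    subset_convexHull ℝ _ ⟨j, update_self _ _ _⟩
  obtain ⟨z, hz, hzx⟩ := exists_mem_segment_norm_lt (x := x) (y := y) (by
    rw [inner_sub_right]
    have : 0 < ⟪x, x⟫ := real_inner_self_pos.2 hx0
    simp only [innerₛₗ_apply_apply] at hy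
    linarith)
  exact ⟨j, y, hyC, z, (convex_convexHull ℝ _).segment_subset hxK hyK hz, hzx⟩

theorem exists_colorful_zero_mem_convexHull_of_finite (hι : finrank ℝ E < Fintype.card ι)
    (C : ι → Set E) (hfin : ∀ i, (C i).Finite) (hC : ∀ i, 0 ∈ convexHull ℝ (C i)) :
    ∃ c : ι → E, (∀ i, c i ∈ C i) ∧ 0 ∈ convexHull ℝ (range c) := by
  classical
  set S := ⋃ c ∈ univ.pi C, convexHull ℝ (range c)
  have hS : IsCompact S :=
    (Set.Finite.pi hfin).isCompact_biUnion fun c _ => (finite_range c).isCompact_convexHull ℝ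
  have hSne : S.Nonempty := by
    have : Nonempty ι := Fintype.card_pos_iff.1 (by omega)
    obtain ⟨c, hc⟩ := univ_pi_nonempty_iff.2 fun i => convexHull_nonempty_iff.1 ⟨0, hC i⟩
    exact (convexHull_nonempty_iff.2 (range_nonempty c)).mono (subset_biUnion_of_mem hc)
  obtain ⟨x, hxS, hmin⟩ := hS.exists_isMinOn hSne continuous_norm.continuousOn
  obtain ⟨c, hc, hxc⟩ := mem_iUnion₂.1 hxS
  refine ⟨c, fun i => hc i (mem_univ i), ?_⟩
  by_contra h0
  have hx0 : x ≠ 0 := by rintro rfl; exact h0 hxc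
  have hcx : ∀ i, ⟪x, x⟫ ≤ ⟪x, c i⟫ := fun i =>
    (hmin.on_subset (subset_biUnion_of_mem hc)).inner_self_le_inner (convex_convexHull ℝ _) hxc
      (subset_convexHull ℝ _ (mem_range_self i))
  obtain ⟨j, y, hy, z, hz, hzx⟩ := exists_update_mem_convexHull_norm_lt hι hC hxc hx0 hcx
  have hupd : update c j y ∈ univ.pi C := fun i _ => by
    rcases eq_or_ne i j with rfl | hij
    · simpa using hy
    · simpa [hij] using hc i (mem_univ i)
  exact (isMinOn_iff.1 hmin z (mem_biUnion hupd hz)).not_gt hzx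

end InnerProductSpace

theorem exists_colorful_zero_mem_convexHull {V ι : Type*} [AddCommGroup V] [Module ℝ V]
    [FiniteDimensional ℝ V] [Fintype ι] (hι : finrank ℝ V < Fintype.card ι) (C : ι → Set V)
    (hC : ∀ i, 0 ∈ convexHull ℝ (C i)) :
    ∃ c : ι → V, (∀ i, c i ∈ C i) ∧ 0 ∈ convexHull ℝ (range c) := by
  have hfin : ∀ i, ∃ t : Finset V, ↑t ⊆ C i ∧ 0 ∈ convexHull ℝ (t : Set V) := fun i => by
    simpa using (convexHull_eq_union_convexHull_finite_subsets (C i)).subset (hC i)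
  choose T hTC hT0 using hfin
  let e := LinearEquiv.ofFinrankEq V (EuclideanSpace ℝ (Fin (finrank ℝ V)))
    finrank_euclideanSpace_fin.symm
  obtain ⟨c, hc, hc0⟩ := exists_colorful_zero_mem_convexHull_of_finite (by simpa using hι)
    (fun i => e '' T i) (fun i => (T i).finite_toSet.image e)
    (fun i => zero_mem_convexHull_image e.toLinearMap (hT0 i))
  refine ⟨e.symm ∘ c, fun i => ?_, ?_⟩
  · obtain ⟨y, hy, hyc⟩ := hc i
    simpa [← hyc] using hTC i hy
  · rw [range_comp]
    exact zero_mem_convexHull_image e.symm.toLinearMap hc0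

/-- The colorful Carathéodory theorem (convex version, Bárány): if each of `d+1`
color classes `C₁, …, C_{d+1} ⊂ ℝ^d` contains the origin in its convex hull, then
there is a colorful choice containing the origin in its convex hull. -/
theorem colorful_caratheodory (d : ℕ) (C : Fin (d + 1) → Set (Fin d → ℝ))
    (h : ∀ i, (0 : Fin d → ℝ) ∈ convexHull ℝ (C i)) :
    ∃ c : Fin (d + 1) → Fin d → ℝ, (∀ i, c i ∈ C i) ∧
      (0 : Fin d → ℝ) ∈ convexHull ℝ (Set.range c) :=
  exists_colorful_zero_mem_convexHull (by simp) C h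
end

section
/- Tverberg's theorem: any set P ⊂ ℝ^d of (m−1)(d+1)+1 points admits a partition into m pairwise disjoint subsets T₁, …, T_m whose convex hulls have a common point. -/
open scoped Classical

/-!
Sarkaria's lifting: with `v₀, …, v_M` the vertices `e₀, …, e_{M-1}, -𝟙` of a simplex around the
origin of `ℝ^M`, lift a point `p ∈ ℝ^d` in color `j` to `v_j ⊗ (1, p) ∈ ℝ^{M(d+1)}`. Since
`∑ v_j = 0`, the origin lies in the hull of the `M + 1` lifts of each point, and there are
`M(d+1) + 1` points, so the colorful Carathéodory theorem colors the points by `J` with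
`∑ λ_p v_{J p} ⊗ (1, p) = 0` for some convex weights `λ`. The only linear relations among the `v_j`
are multiples of `∑ v_j = 0`, so the vectors `∑_{J p = j} λ_p (1, p)` coincide for all colors `j`:
by the first coordinate every color class has weight `1 / (M + 1)`, and then all classes have the
same center of mass.

Colorful Carathéodory follows Bárány: take a point `y` of least norm in the union of the hulls of
all colorful choices. If `y ≠ 0`, the hyperplane `⟪y, ·⟫ = ‖y‖²` supports the hull of the choice
containing `y`, so `y` is a convex combination of at most `dim` of its points; replacing the
unused color by a point of that color on the origin's side of the hyperplane yields a hull
containing `y` on which `y` is no longer of least norm.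
-/

open Set Module

theorem AffineIndependent.linearIndependent_of_map_eq {ι k V : Type*} [Field k]
    [AddCommGroup V] [Module k V] {z : ι → V} (hz : AffineIndependent k z) (f : V →ₗ[k] k)
    {c : k} (hc : c ≠ 0) (hf : ∀ i, f (z i) = c) : LinearIndependent k z := by
  refine linearIndependent_iff'.2 fun s g hg => hz.eq_zero_of_sum_eq_zero ?_ hg
  have := congrArg f hg
  simp only [map_sum, map_smul, hf, smul_eq_mul, ← Finset.sum_mul, map_zero] at this
  exact (mul_eq_zero.1 this).resolve_right hc

theorem exists_weights_of_mem_convexHull_range {ι R E : Type*} [Fintype ι] [Field R]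
    [LinearOrder R] [IsStrictOrderedRing R] [AddCommGroup E] [Module R E] {v : ι → E} {x : E}
    (hx : x ∈ convexHull R (Set.range v)) :
    ∃ w : ι → R, (∀ i, 0 ≤ w i) ∧ ∑ i, w i = 1 ∧ ∑ i, w i • v i = x := by
  rw [convexHull_range_eq_exists_affineCombination] at hx
  obtain ⟨s, w, hw₀, hw₁, rfl⟩ := hx
  refine ⟨fun i => if i ∈ s then w i else 0, fun i => ?_, ?_, ?_⟩
  · dsimp only
    split_ifs with hi
    exacts [hw₀ i hi, le_rfl]
  · simpa [Finset.sum_ite_mem] using hw₁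
  · simp [s.affineCombination_eq_linear_combination v w hw₁, ite_smul, Finset.sum_ite_mem]

section ColorfulCaratheodory

variable {ι E : Type*} [NormedAddCommGroup E] [InnerProductSpace ℝ E]

open scoped RealInnerProductSpace

theorem norm_sq_le_inner_of_isMinOn {K : Set E} (hK : Convex ℝ K) {y z : E} (hy : y ∈ K)
    (hmin : IsMinOn norm K y) (hz : z ∈ K) : ‖y‖ ^ 2 ≤ ⟪y, z⟫ := by
  have : Nonempty K := ⟨⟨y, hy⟩⟩
  have hinf : ‖0 - y‖ = ⨅ w : K, ‖0 - (w : E)‖ :=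
    le_antisymm (le_ciInf fun w => by simpa using hmin w.2)
      (ciInf_le (f := fun w : K => ‖0 - (w : E)‖) ⟨0, by rintro _ ⟨w, rfl⟩; positivity⟩
        ⟨y, hy⟩)
  have := (norm_eq_iInf_iff_real_inner_le_zero hK hy).1 hinf z hz
  rw [zero_sub, inner_neg_left, inner_sub_right, real_inner_self_eq_norm_sq] at this
  linarith

variable [FiniteDimensional ℝ E] [Fintype ι]

theorem exists_mem_convexHull_image_compl_singleton (hι : finrank ℝ E < Fintype.card ι)
    {x : ι → E} {y : E} (hy : y ≠ 0) (hyx : y ∈ convexHull ℝ (range x))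
    (hx : ∀ i, ‖y‖ ^ 2 ≤ ⟪y, x i⟫) : ∃ i, y ∈ convexHull ℝ (x '' {i}ᶜ) := by
  obtain ⟨κ, _, z, w, hzx, hz, hw₀, hw₁, hwz⟩ := eq_pos_convex_span_of_mem_convexHull hyx
  -- the weights are positive, so every `z k` lies on the supporting hyperplane
  have hz_face : ∀ k, ⟪y, z k⟫ = ‖y‖ ^ 2 := by
    have hgap : ∀ k, 0 ≤ ⟪y, z k⟫ - ‖y‖ ^ 2 := fun k => by
      obtain ⟨i, hi⟩ := hzx (mem_range_self k)
      linarith [hi ▸ hx i]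
    have hsum : ∑ k, w k * (⟪y, z k⟫ - ‖y‖ ^ 2) = 0 := by
      simp only [mul_sub, Finset.sum_sub_distrib, ← Finset.sum_mul, hw₁, ← inner_smul_right,
        ← inner_sum, hwz, real_inner_self_eq_norm_sq]
      ring
    intro k
    have := (Finset.sum_eq_zero_iff_of_nonneg fun k _ => mul_nonneg (hw₀ k).le (hgap k)).1
      hsum k (Finset.mem_univ k)
    linarith [(mul_eq_zero.1 this).resolve_left (hw₀ k).ne']
  have hκ : Fintype.card κ < Fintype.card ι :=
    (hz.linearIndependent_of_map_eq (innerₛₗ ℝ y) (by positivity)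
      hz_face).fintype_card_le_finrank.trans_lt hι
  choose e he using fun k => hzx (mem_range_self k)
  obtain ⟨i, -, hi⟩ := Finset.exists_mem_notMem_of_card_lt_card
    ((Finset.card_image_le (s := Finset.univ) (f := e)).trans_lt hκ)
  refine ⟨i, mem_convexHull_of_exists_fintype w z (fun k => (hw₀ k).le) hw₁ (fun k => ?_) hwz⟩
  exact ⟨e k, fun hk => hi (Finset.mem_image.2 ⟨k, Finset.mem_univ k, hk⟩), he k⟩

theorem exists_colorful_zero_mem_convexHull_s10 (hι : finrank ℝ E < Fintype.card ι)
    {S : ι → Set E} (hS : ∀ i, (S i).Finite) (hS₀ : ∀ i, (0 : E) ∈ convexHull ℝ (S i)) :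
    ∃ x : ι → E, (∀ i, x i ∈ S i) ∧ (0 : E) ∈ convexHull ℝ (range x) := by
  have : Nonempty ι := Fintype.card_pos_iff.1 (by omega)
  set X := Set.pi univ S
  obtain ⟨x₀, hx₀⟩ : X.Nonempty :=
    Set.univ_pi_nonempty_iff.2 fun i => (convexHull_nonempty_iff (𝕜 := ℝ)).1 ⟨0, hS₀ i⟩
  set U := ⋃ x ∈ X, convexHull ℝ (range x)
  have hU : IsCompact U := (Set.Finite.pi hS).isCompact_biUnion fun x _ =>
    (finite_range x).isCompact_convexHull (𝕜 := ℝ)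
  have hU₀ : U.Nonempty := ⟨x₀ (Classical.arbitrary ι),
    mem_biUnion hx₀ (subset_convexHull ℝ _ (mem_range_self _))⟩
  obtain ⟨y, hyU, hymin⟩ := hU.exists_isMinOn hU₀ continuous_norm.continuousOn
  obtain ⟨x, hxX, hyx⟩ := mem_iUnion₂.1 hyU
  have hmin : ∀ x' ∈ X, y ∈ convexHull ℝ (range x') →
      ∀ z ∈ convexHull ℝ (range x'), ‖y‖ ^ 2 ≤ ⟪y, z⟫ := fun x' hx' hyx' z hz =>
    norm_sq_le_inner_of_isMinOn (convex_convexHull ℝ _) hyx'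
      (hymin.on_subset (subset_biUnion_of_mem (u := fun x => convexHull ℝ (range x)) hx')) hz
  refine ⟨x, fun i => hxX i (mem_univ i), ?_⟩
  by_contra hy₀
  have hy : y ≠ 0 := fun h => hy₀ (h ▸ hyx)
  obtain ⟨i, hyi⟩ := exists_mem_convexHull_image_compl_singleton hι hy hyx
    fun i => hmin x hxX hyx _ (subset_convexHull ℝ _ (mem_range_self i))
  obtain ⟨s, hsS, hs⟩ : ∃ s ∈ S i, ⟪y, s⟫ < ‖y‖ ^ 2 := by
    by_contra! h
    have : ‖y‖ ^ 2 ≤ ⟪y, (0 : E)⟫ :=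
      convexHull_min h (convex_halfSpace_ge (innerₛₗ ℝ y).isLinear (‖y‖ ^ 2)) (hS₀ i)
    rw [inner_zero_right] at this
    exact hy (by simpa using this.antisymm (sq_nonneg ‖y‖))
  set x' := Function.update x i s
  have hx' : x' ∈ X := fun k _ => by
    rcases eq_or_ne k i with rfl | hk
    · simpa [x'] using hsS
    · simpa [x', hk] using hxX k (mem_univ k)
  have hyx' : y ∈ convexHull ℝ (range x') := convexHull_mono (by
    rintro _ ⟨k, hk, rfl⟩
    exact ⟨k, Function.update_of_ne hk _ _⟩) hyi
  have := hmin x' hx' hyx' s (subset_convexHull ℝ _ ⟨i, Function.update_self i s x⟩)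
  linarith

end ColorfulCaratheodory

section Sarkaria

variable {M d : ℕ}

def simplexVertex (M : ℕ) : Fin (M + 1) → Fin M → ℝ :=
  Fin.lastCases (-1) fun a => Pi.single a 1

theorem sum_simplexVertex : ∑ j, simplexVertex M j = 0 := by
  simp [simplexVertex, Fin.sum_univ_castSucc, Finset.univ_sum_single, ← Pi.one_def]

theorem eq_of_sum_smul_simplexVertex_eq_zero {c : Fin (M + 1) → ℝ}
    (hc : ∑ j, c j • simplexVertex M j = 0) (j : Fin (M + 1)) : c j = c (Fin.last M) := by
  induction j using Fin.lastCases with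
  | last => rfl
  | cast a =>
    simpa [simplexVertex, Fin.sum_univ_castSucc, Pi.single_apply, ← sub_eq_add_neg, sub_eq_zero]
      using congrFun hc a

def sarkariaLift (j : Fin (M + 1)) (p : Fin d → ℝ) : EuclideanSpace ℝ (Fin M × Fin (d + 1)) :=
  WithLp.toLp 2 fun ab => simplexVertex M j ab.1 * (Fin.cons 1 p : Fin (d + 1) → ℝ) ab.2

theorem zero_mem_convexHull_range_sarkariaLift (p : Fin d → ℝ) :
    (0 : EuclideanSpace ℝ (Fin M × Fin (d + 1))) ∈
      convexHull ℝ (range fun j : Fin (M + 1) => sarkariaLift j p) := by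
  refine mem_convexHull_of_exists_fintype (fun _ => ((M : ℝ) + 1)⁻¹) _ (fun _ => by positivity)
    (by simp [Nat.cast_add_one_ne_zero]) (fun j => mem_range_self j) ?_
  ext ⟨a, b⟩
  have := congrFun (sum_simplexVertex (M := M)) a
  simp only [Finset.sum_apply] at this
  simp [sarkariaLift, ← Finset.mul_sum, ← Finset.sum_mul, this]

theorem sum_smul_cons_eq_of_sum_smul_sarkariaLift_eq_zero {ι : Type*} [Fintype ι]
    {J : ι → Fin (M + 1)} {p : ι → Fin d → ℝ} {w : ι → ℝ}
    (h : ∑ i, w i • sarkariaLift (J i) (p i) = 0) (j : Fin (M + 1)) :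
    ∑ i with J i = j, w i • (Fin.cons 1 (p i) : Fin (d + 1) → ℝ) =
      ∑ i with J i = Fin.last M, w i • (Fin.cons 1 (p i) : Fin (d + 1) → ℝ) := by
  funext b
  simp only [Finset.sum_apply, Pi.smul_apply, smul_eq_mul]
  refine eq_of_sum_smul_simplexVertex_eq_zero
    (c := fun j => ∑ i with J i = j, w i * (Fin.cons 1 (p i) : Fin (d + 1) → ℝ) b) ?_ j
  funext a
  have := congrArg (fun v => v (a, b)) h
  simp only [sarkariaLift, WithLp.ofLp_sum, WithLp.ofLp_smul, Finset.sum_apply, Pi.smul_apply,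
    smul_eq_mul, PiLp.zero_apply] at this
  simp only [Finset.sum_apply, Pi.smul_apply, smul_eq_mul, Finset.sum_mul, Pi.zero_apply]
  rw [← this, ← Finset.sum_fiberwise Finset.univ J]
  refine Finset.sum_congr rfl fun j _ => Finset.sum_congr rfl fun i hi => ?_
  rw [(Finset.mem_filter.1 hi).2]
  ring

theorem exists_coloring_iInter_convexHull_nonempty {ι : Type*} [Fintype ι]
    (hι : Fintype.card ι = M * (d + 1) + 1) (p : ι → Fin d → ℝ) :
    ∃ J : ι → Fin (M + 1), (⋂ j, convexHull ℝ (p '' {i | J i = j})).Nonempty := by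
  obtain ⟨x, hxS, hx₀⟩ := exists_colorful_zero_mem_convexHull_s10 (by simp [hι])
    (fun i => finite_range _) fun i => zero_mem_convexHull_range_sarkariaLift (M := M) (p i)
  choose J hJ using hxS
  obtain ⟨w, hw₀, hw₁, hwx⟩ := exists_weights_of_mem_convexHull_range hx₀
  set W := fun j => ∑ i with J i = j, w i • (Fin.cons 1 (p i) : Fin (d + 1) → ℝ)
  have hW : ∀ j, W j = W (Fin.last M) :=
    sum_smul_cons_eq_of_sum_smul_sarkariaLift_eq_zero (by simpa only [hJ] using hwx)
  have hW₀ : ∀ j, W j 0 = ∑ i with J i = j, w i := fun j => by simp [W, Finset.sum_apply]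
  have hcenter : ∀ j,
      (Finset.univ.filter (J · = j)).centerMass w p = (W j 0)⁻¹ • Fin.tail (W j) := fun j => by
    ext a
    simp [W, Finset.centerMass, Finset.sum_apply, Fin.tail]
  have hpos : 0 < W (Fin.last M) 0 := by
    have : ∑ j, W j 0 = 1 := by simp only [hW₀, Finset.sum_fiberwise, hw₁]
    simp only [hW, Finset.sum_const, Finset.card_univ, Fintype.card_fin, nsmul_eq_mul] at this
    exact pos_of_mul_pos_right (this ▸ one_pos) (by positivity)
  refine ⟨J, (W (Fin.last M) 0)⁻¹ • Fin.tail (W (Fin.last M)), mem_iInter.2 fun j => ?_⟩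
  rw [← hW j, ← hcenter]
  refine Finset.centerMass_mem_convexHull _ (fun i _ => hw₀ i) ?_ fun i hi => ?_
  · rw [← hW₀, hW]
    exact hpos
  · exact mem_image_of_mem p (by simpa using hi)

end Sarkaria

/-- Tverberg's theorem: any set of `(m-1)(d+1)+1` points in `ℝ^d` can be partitioned
into `m` pairwise disjoint parts whose convex hulls have a common point. -/
theorem tverberg (d m : ℕ) (hm : 1 ≤ m) (P : Finset (Fin d → ℝ))
    (hcard : P.card = (m - 1) * (d + 1) + 1) :
    ∃ T : Fin m → Finset (Fin d → ℝ),
      (∀ i j, i ≠ j → Disjoint (T i) (T j)) ∧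
      Finset.univ.biUnion T = P ∧
      (⋂ i, convexHull ℝ (T i : Set (Fin d → ℝ))).Nonempty := by
  obtain ⟨M, rfl⟩ : ∃ M, m = M + 1 := ⟨m - 1, by omega⟩
  obtain ⟨J, hJ⟩ := exists_coloring_iInter_convexHull_nonempty (ι := P)
    (by simpa using hcard) Subtype.val
  refine ⟨fun j => (Finset.univ.filter (J · = j)).image Subtype.val, fun j k hjk => ?_, ?_, ?_⟩
  · simp only [Finset.disjoint_left, Finset.mem_image, Finset.mem_filter]
    rintro _ ⟨x, ⟨-, rfl⟩, rfl⟩ ⟨y, ⟨-, hy⟩, hxy⟩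
    exact hjk (Subtype.ext hxy ▸ hy)
  · ext x
    simp
  · simpa using hJ
end

section
/- The centerpoint theorem: for every finite point set P ⊂ ℝ^d there exists a point q ∈ ℝ^d such that every closed halfspace containing q contains at least ⌈|P|/(d+1)⌉ points of P. -/
open scoped Classical

/-- The centerpoint theorem: every finite point set `P ⊂ ℝ^d` admits a point `q`
such that every closed halfspace containing `q` contains at least `⌈|P|/(d+1)⌉`
points of `P`. -/
theorem centerpoint (d : ℕ) (P : Finset (Fin d → ℝ)) :
    ∃ q : Fin d → ℝ, ∀ (a : Fin d → ℝ) (r : ℝ), r ≤ ∑ j, a j * q j →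
      ⌈(P.card : ℚ) / (d + 1)⌉₊ ≤ (P.filter (fun p => r ≤ ∑ j, a j * p j)).card := by
  set n := P.card with hn
  set k := ⌈(n : ℚ) / (d + 1)⌉₊ with hk
  by_cases hP : n = 0
  · exact ⟨0, fun a r _ => by simp [hk, hP]⟩
  have hn1 : 1 ≤ n := Nat.one_le_iff_ne_zero.mpr hP
  have hk1 : 1 ≤ k := by
    rw [hk]
    apply Nat.one_le_ceil_iff.mpr
    positivity
  -- key arithmetic : (d+1)*(k-1) < n
  have harith : (d + 1) * (k - 1) < n := by
    have h1 : (k - 1 : ℕ) < k := Nat.sub_lt hk1 one_pos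
    have h2 : ((k - 1 : ℕ) : ℚ) < (n : ℚ) / (d + 1) := Nat.lt_ceil.mp h1
    have hd : (0 : ℚ) < (d : ℚ) + 1 := by positivity
    have h3 : ((k - 1 : ℕ) : ℚ) * ((d : ℚ) + 1) < n := by
      rw [← lt_div_iff₀ hd] at *
      exact h2
    have : (((d + 1) * (k - 1) : ℕ) : ℚ) < (n : ℚ) := by push_cast; linarith
    exact_mod_cast this
  have hkn : k ≤ n := by
    have := Nat.le_mul_of_pos_left (k - 1) (show 0 < d + 1 by omega)
    omega
  -- the family of convex hulls
  set s : Finset (Finset (Fin d → ℝ)) :=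
    P.powerset.filter (fun S => n - k + 1 ≤ S.card) with hs
  have hfinrank : Module.finrank ℝ (Fin d → ℝ) = d := Module.finrank_fin_fun ℝ
  have hHelly : (⋂ S ∈ s, (convexHull ℝ (S : Set (Fin d → ℝ)))).Nonempty := by
    apply Convex.helly_theorem' (𝕜 := ℝ)
    · intro S _; exact convex_convexHull ℝ _
    · intro I hI hIcard
      rw [hfinrank] at hIcard
      -- find a common point of P in all S ∈ I
      have hp : ∃ p ∈ P, ∀ S ∈ I, p ∈ S := by
        by_contra hcon
        push_neg at hcon
        have hsub : P ⊆ I.biUnion (fun S => P \ S) := by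
          intro p hp
          obtain ⟨S, hS, hpS⟩ := hcon p hp
          exact Finset.mem_biUnion.mpr ⟨S, hS, Finset.mem_sdiff.mpr ⟨hp, hpS⟩⟩
        have h1 : n ≤ ∑ S ∈ I, (P \ S).card :=
          le_trans (Finset.card_le_card hsub) (Finset.card_biUnion_le)
        have h2 : ∀ S ∈ I, (P \ S).card ≤ k - 1 := by
          intro S hS
          have hS' := hI hS
          rw [hs, Finset.mem_filter, Finset.mem_powerset] at hS'
          have := Finset.card_sdiff_of_subset hS'.1
          omega
        have h3 : ∑ S ∈ I, (P \ S).card ≤ I.card * (k - 1) := by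
          calc ∑ S ∈ I, (P \ S).card ≤ ∑ _S ∈ I, (k - 1) := Finset.sum_le_sum h2
          _ = I.card * (k - 1) := by rw [Finset.sum_const, smul_eq_mul]
        have h4 : I.card * (k - 1) ≤ (d + 1) * (k - 1) :=
          Nat.mul_le_mul_right _ hIcard
        omega
      obtain ⟨p, hpP, hpS⟩ := hp
      exact ⟨p, Set.mem_biInter fun S hS =>
        subset_convexHull ℝ _ (Finset.mem_coe.mpr (hpS S hS))⟩
  obtain ⟨q, hq⟩ := hHelly
  refine ⟨q, fun a r hr => ?_⟩
  by_contra hlt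
  push_neg at hlt
  set S := P.filter (fun p => ¬ r ≤ ∑ j, a j * p j) with hS
  have hScard : n - k + 1 ≤ S.card := by
    have hsplit : (P.filter (fun p => r ≤ ∑ j, a j * p j)).card + S.card = n := by
      rw [hS, hn]
      exact Finset.card_filter_add_card_filter_not _
    generalize hA : (P.filter (fun p => r ≤ ∑ j, a j * p j)).card = A at hsplit hlt
    clear_value n k S
    clear hq hr hs hS hk hn hA
    omega
  have hSs : S ∈ s := by
    rw [hs, Finset.mem_filter, Finset.mem_powerset]
    exact ⟨Finset.filter_subset _ _, hScard⟩
  have hqS : q ∈ convexHull ℝ (S : Set (Fin d → ℝ)) := by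
    have := Set.mem_iInter₂.mp hq S hSs
    exact this
  -- the open halfspace is convex and contains S
  have hconv : Convex ℝ {x : Fin d → ℝ | ∑ j, a j * x j < r} := by
    apply convex_halfSpace_lt (f := fun x : Fin d → ℝ => ∑ j, a j * x j)
    constructor
    · intro x y; simp [mul_add, Finset.sum_add_distrib]
    · intro c x; simp [Finset.mul_sum]; exact Finset.sum_congr rfl fun j _ => by ring
  have hsubset : (S : Set (Fin d → ℝ)) ⊆ {x : Fin d → ℝ | ∑ j, a j * x j < r} := by
    intro x hx
    rw [Finset.mem_coe, hS, Finset.mem_filter] at hx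
    exact lt_of_not_ge hx.2
  have : q ∈ {x : Fin d → ℝ | ∑ j, a j * x j < r} :=
    convexHull_min hsubset hconv hqS
  exact absurd hr (not_le.mpr this)
end

section
/- Let Q be a simple polytope in ℝ^d given as the intersection of an affine subspace S (the intersection of a set H⁼ of hyperplanes) with finitely many halfspaces H⁻, where the hyperplanes of H⁼ together with the boundary hyperplanes of H⁻ are in general position (every k of them intersect in a set that is empty or of dimension d−k). If Q is nonempty, then dim Q = dim S; i.e., intersecting S with the halfspaces does not decrease the dimension. -/
def kerInter {d : ℕ} {ι : Type} (a : ι → Fin d → ℝ) (s : Finset ι) :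
    Submodule ℝ (Fin d → ℝ) where
  carrier := {v | ∀ i ∈ s, ∑ k, a i k * v k = 0}
  add_mem' := by
    intro x y hx hy i hi
    simp only [Pi.add_apply, mul_add, Finset.sum_add_distrib, hx i hi, hy i hi, add_zero]
  zero_mem' := by intro i hi; simp
  smul_mem' := by
    intro c x hx i hi
    simp only [Pi.smul_apply, smul_eq_mul, mul_left_comm, ← Finset.mul_sum, hx i hi, mul_zero]

theorem linfact {d : ℕ} {ι : Type} (a : ι → Fin d → ℝ) (i : ι) (x v : Fin d → ℝ) (c : ℝ) :
    ∑ k, a i k * (x + c • v) k = (∑ k, a i k * x k) + c * ∑ k, a i k * v k := by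
  simp only [Pi.add_apply, Pi.smul_apply, smul_eq_mul, mul_add, Finset.sum_add_distrib,
    Finset.mul_sum, mul_left_comm]

theorem midfact {d : ℕ} {ι : Type} (a : ι → Fin d → ℝ) (i : ι) (x y : Fin d → ℝ) :
    ∑ k, a i k * ((1/2 : ℝ) • (x + y)) k
      = (∑ k, a i k * x k)/2 + (∑ k, a i k * y k)/2 := by
  have h : ∀ k, a i k * ((1/2 : ℝ) • (x + y)) k = (a i k * x k)/2 + (a i k * y k)/2 := by
    intro k; simp only [Pi.smul_apply, Pi.add_apply, smul_eq_mul]; ring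
  rw [Finset.sum_congr rfl (fun k _ => h k), Finset.sum_add_distrib,
    ← Finset.sum_div, ← Finset.sum_div]

theorem mem_kerInter {d : ℕ} {ι : Type} (a : ι → Fin d → ℝ) (s : Finset ι) (v : Fin d → ℝ) :
    v ∈ kerInter a s ↔ ∀ i ∈ s, ∑ k, a i k * v k = 0 := Iff.rfl

theorem smulfact {d : ℕ} {ι : Type} (a : ι → Fin d → ℝ) (i : ι) (c : ℝ) (v : Fin d → ℝ) :
    ∑ k, a i k * (c • v) k = c * ∑ k, a i k * v k := by
  simp only [Pi.smul_apply, smul_eq_mul, mul_left_comm, ← Finset.mul_sum]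

theorem dir_eq_kerInter {d : ℕ} {ι : Type} (a : ι → Fin d → ℝ) (r : ι → ℝ) (s : Finset ι)
    (x₀ : Fin d → ℝ) (hx₀ : ∀ i ∈ s, ∑ k, a i k * x₀ k = r i) :
    (affineSpan ℝ (⋂ i ∈ s, {x : Fin d → ℝ | ∑ k, a i k * x k = r i})).direction
      = kerInter a s := by
  have hT : (⋂ i ∈ s, {x : Fin d → ℝ | ∑ k, a i k * x k = r i})
      = ↑(AffineSubspace.mk' x₀ (kerInter a s)) := by
    ext x
    simp only [Set.mem_iInter, Set.mem_setOf_eq, SetLike.mem_coe,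
      AffineSubspace.mem_mk']
    constructor
    · intro h i hi
      rw [show (x -ᵥ x₀ : Fin d → ℝ) = x + (-1 : ℝ) • x₀ by ext k; simp [vsub_eq_sub]; ring]
      rw [linfact, h i hi, hx₀ i hi]; ring
    · intro h i hi
      have hv := h i hi
      rw [show (x -ᵥ x₀ : Fin d → ℝ) = x + (-1 : ℝ) • x₀ by ext k; simp [vsub_eq_sub]; ring] at hv
      rw [linfact, hx₀ i hi] at hv
      linarith
  rw [hT, AffineSubspace.affineSpan_coe, AffineSubspace.direction_mk']

/-- Let `S ⊆ ℝ^d` be the intersection of a finite family of hyperplanes `H⁼`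
(indexed by `ι₁`) and let `Q` be the intersection of `S` with a finite family of
halfspaces `H⁻` (indexed by `ι₂`), where all hyperplanes of `H⁼` together with the
boundary hyperplanes of `H⁻` are in general position: any `k` of them intersect in
a set that is empty or an affine subspace of dimension `d - k` (in particular empty
when `k > d`).  If `Q` is nonempty, then `dim Q = dim S`. -/
theorem general_position_dim (d : ℕ) (ι₁ ι₂ : Type) [Fintype ι₁] [Fintype ι₂]
    (a : ι₁ ⊕ ι₂ → (Fin d → ℝ)) (r : ι₁ ⊕ ι₂ → ℝ)
    (ha : ∀ i, a i ≠ 0)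
    (hgen : ∀ s : Finset (ι₁ ⊕ ι₂),
      (⋂ i ∈ s, {x : Fin d → ℝ | ∑ k, a i k * x k = r i}) = ∅ ∨
      (s.card ≤ d ∧
        Module.finrank ℝ
          (affineSpan ℝ (⋂ i ∈ s, {x : Fin d → ℝ | ∑ k, a i k * x k = r i})).direction
          = d - s.card))
    (hQ : ((⋂ i : ι₁, {x : Fin d → ℝ | ∑ k, a (Sum.inl i) k * x k = r (Sum.inl i)}) ∩
        (⋂ j : ι₂, {x : Fin d → ℝ | ∑ k, a (Sum.inr j) k * x k ≤ r (Sum.inr j)})).Nonempty) :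
    Module.finrank ℝ
      (affineSpan ℝ
        ((⋂ i : ι₁, {x : Fin d → ℝ | ∑ k, a (Sum.inl i) k * x k = r (Sum.inl i)}) ∩
         (⋂ j : ι₂, {x : Fin d → ℝ | ∑ k, a (Sum.inr j) k * x k ≤ r (Sum.inr j)}))).direction
    = Module.finrank ℝ
      (affineSpan ℝ
        (⋂ i : ι₁, {x : Fin d → ℝ | ∑ k, a (Sum.inl i) k * x k = r (Sum.inl i)})).direction := by
  classical
  set S : Set (Fin d → ℝ) :=
    ⋂ i : ι₁, {x : Fin d → ℝ | ∑ k, a (Sum.inl i) k * x k = r (Sum.inl i)} with hSdef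
  set Q : Set (Fin d → ℝ) := S ∩
    (⋂ j : ι₂, {x : Fin d → ℝ | ∑ k, a (Sum.inr j) k * x k ≤ r (Sum.inr j)}) with hQdef
  have memQ : ∀ x, x ∈ Q ↔
      (∀ i : ι₁, ∑ k, a (Sum.inl i) k * x k = r (Sum.inl i)) ∧
      (∀ j : ι₂, ∑ k, a (Sum.inr j) k * x k ≤ r (Sum.inr j)) := by
    intro x
    simp [hQdef, hSdef, Set.mem_iInter]
  -- tight set
  set J : (Fin d → ℝ) → Finset ι₂ := fun x =>
    Finset.univ.filter (fun j => ∑ k, a (Sum.inr j) k * x k = r (Sum.inr j)) with hJdef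
  have memJ : ∀ x j, j ∈ J x ↔ ∑ k, a (Sum.inr j) k * x k = r (Sum.inr j) := by
    intro x j; simp [hJdef]
  -- choose minimal tight set point
  have hex : ∃ n, ∃ x ∈ Q, (J x).card = n := ⟨_, hQ.choose, hQ.choose_spec, rfl⟩
  obtain ⟨x₀, hx₀Q, hcard⟩ := Nat.find_spec hex
  have hmin : ∀ x ∈ Q, (J x₀).card ≤ (J x).card := by
    intro x hx
    rw [hcard]
    exact Nat.find_min' hex ⟨x, hx, rfl⟩
  have hx₀S := (memQ x₀).1 hx₀Q
  -- minimal tight set is contained in every tight set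
  have hsub : ∀ x ∈ Q, J x₀ ⊆ J x := by
    intro x hx
    set m : Fin d → ℝ := (1/2 : ℝ) • (x₀ + x) with hm
    have hxc := (memQ x).1 hx
    have hmQ : m ∈ Q := by
      rw [memQ]
      constructor
      · intro i; rw [hm, midfact, hx₀S.1 i, hxc.1 i]; ring
      · intro j; rw [hm, midfact]; have := hx₀S.2 j; have := hxc.2 j; linarith
    have hJm : J m = J x₀ ∩ J x := by
      ext j
      simp only [memJ, Finset.mem_inter]
      have h1 := hx₀S.2 j
      have h2 := hxc.2 j
      rw [hm, midfact]
      constructor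
      · intro h; constructor <;> linarith
      · intro ⟨e1, e2⟩; rw [e1, e2]; ring
    have h1 : (J x₀).card ≤ (J m).card := hmin m hmQ
    have h2 : J m ⊆ J x₀ := by rw [hJm]; exact Finset.inter_subset_left
    have : J m = J x₀ := Finset.eq_of_subset_of_card_le h2 h1
    intro j hj
    rw [← this, hJm] at hj
    exact (Finset.mem_inter.1 hj).2
  -- perturbation lemma
  have key : ∀ v : Fin d → ℝ,
      (∀ i : ι₁, ∑ k, a (Sum.inl i) k * v k = 0) →
      (∀ j' ∈ J x₀, ∑ k, a (Sum.inr j') k * v k ≤ 0) →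
      ∃ ε : ℝ, 0 < ε ∧ x₀ + ε • v ∈ Q := by
    intro v hv1 hv2
    set Fs : Finset ι₂ := Finset.univ \ J x₀ with hFs
    set εf : ι₂ → ℝ := fun j' =>
      (r (Sum.inr j') - ∑ k, a (Sum.inr j') k * x₀ k) / (|∑ k, a (Sum.inr j') k * v k| + 1)
      with hεf
    have hstrict : ∀ j' ∈ Fs, ∑ k, a (Sum.inr j') k * x₀ k < r (Sum.inr j') := by
      intro j' hj'
      have h1 := hx₀S.2 j'
      have h2 : j' ∉ J x₀ := (Finset.mem_sdiff.1 hj').2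
      rw [memJ] at h2
      exact lt_of_le_of_ne h1 h2
    have hεfpos : ∀ j' ∈ Fs, 0 < εf j' := by
      intro j' hj'
      apply div_pos
      · linarith [hstrict j' hj']
      · positivity
    set ε : ℝ := if h : Fs.Nonempty then min 1 (Fs.inf' h εf) else 1 with hε
    have hεpos : 0 < ε := by
      rw [hε]
      split
      · next h => exact lt_min one_pos ((Finset.lt_inf'_iff h).2 hεfpos)
      · exact one_pos
    have hεle : ∀ j' ∈ Fs, ε ≤ εf j' := by
      intro j' hj'
      rw [hε, dif_pos ⟨j', hj'⟩]
      exact le_trans (min_le_right _ _) (Finset.inf'_le _ hj')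
    refine ⟨ε, hεpos, ?_⟩
    rw [memQ]
    refine ⟨fun i => by rw [linfact, hx₀S.1 i, hv1 i]; ring, fun j' => ?_⟩
    by_cases hj' : j' ∈ J x₀
    · rw [linfact]
      have h1 := hv2 j' hj'
      have h2 := (memJ x₀ j').1 hj'
      nlinarith
    · have hjF : j' ∈ Fs := Finset.mem_sdiff.2 ⟨Finset.mem_univ _, hj'⟩
      rw [linfact]
      have h1 := hεle j' hjF
      have h2 := hεfpos j' hjF
      have h3 := hstrict j' hjF
      have habs : ε * (∑ k, a (Sum.inr j') k * v k)
          ≤ εf j' * (|∑ k, a (Sum.inr j') k * v k| + 1) := by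
        calc ε * (∑ k, a (Sum.inr j') k * v k)
            ≤ ε * |∑ k, a (Sum.inr j') k * v k| :=
              mul_le_mul_of_nonneg_left (le_abs_self _) hεpos.le
          _ ≤ εf j' * (|∑ k, a (Sum.inr j') k * v k| + 1) :=
              mul_le_mul h1 (by linarith [abs_nonneg (∑ k, a (Sum.inr j') k * v k)])
                (abs_nonneg _) h2.le
      simp only [hεf] at habs
      rw [div_mul_cancel₀] at habs
      · linarith
      · positivity
  -- the minimal tight set is empty
  have hJ₀ : J x₀ = ∅ := by
    by_contra hne
    obtain ⟨j, hj⟩ := Finset.nonempty_iff_ne_empty.2 hne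
    set E : Finset (ι₁ ⊕ ι₂) :=
      (Finset.univ.image (Sum.inl : ι₁ → ι₁ ⊕ ι₂)) ∪ (((J x₀).erase j).image Sum.inr) with hE
    set E' : Finset (ι₁ ⊕ ι₂) := insert (Sum.inr j) E with hE'
    have hjE : Sum.inr j ∉ E := by simp [hE]
    have hmemE' : ∀ i ∈ E', ∑ k, a i k * x₀ k = r i := by
      intro i hi
      rw [hE', Finset.mem_insert] at hi
      rcases hi with h | h
      · subst h; exact (memJ x₀ j).1 hj
      · rw [hE, Finset.mem_union] at h
        rcases h with h | h
        · obtain ⟨i₁, _, rfl⟩ := Finset.mem_image.1 h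
          exact hx₀S.1 i₁
        · obtain ⟨j', hj', rfl⟩ := Finset.mem_image.1 h
          exact (memJ x₀ j').1 (Finset.mem_of_mem_erase hj')
    have hmemE : ∀ i ∈ E, ∑ k, a i k * x₀ k = r i := fun i hi =>
      hmemE' i (by rw [hE']; exact Finset.mem_insert_of_mem hi)
    have hx₀mem : ∀ (s : Finset (ι₁ ⊕ ι₂)), (∀ i ∈ s, ∑ k, a i k * x₀ k = r i) →
        x₀ ∈ ⋂ i ∈ s, {x : Fin d → ℝ | ∑ k, a i k * x k = r i} := by
      intro s hs
      simp only [Set.mem_iInter, Set.mem_setOf_eq]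
      exact hs
    rcases hgen E with h | ⟨hcardE, hrkE⟩
    · exact absurd h (Set.nonempty_iff_ne_empty.1 ⟨x₀, hx₀mem E hmemE⟩)
    rcases hgen E' with h | ⟨hcardE', hrkE'⟩
    · exact absurd h (Set.nonempty_iff_ne_empty.1 ⟨x₀, hx₀mem E' hmemE'⟩)
    rw [dir_eq_kerInter a r E x₀ hmemE] at hrkE
    rw [dir_eq_kerInter a r E' x₀ hmemE'] at hrkE'
    have hcardeq : E'.card = E.card + 1 := Finset.card_insert_of_notMem hjE
    have hlt : Module.finrank ℝ (kerInter a E') ≠ Module.finrank ℝ (kerInter a E) := by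
      rw [hrkE, hrkE', hcardeq]
      rw [hcardeq] at hcardE'
      omega
    have hle : kerInter a E' ≤ kerInter a E := by
      intro v hv
      rw [mem_kerInter] at hv ⊢
      exact fun i hi => hv i (by rw [hE']; exact Finset.mem_insert_of_mem hi)
    obtain ⟨v, hvE, hvE'⟩ := SetLike.exists_of_lt
      (lt_of_le_of_ne hle fun h => hlt (by rw [h]))
    rw [mem_kerInter] at hvE
    have ht : ∑ k, a (Sum.inr j) k * v k ≠ 0 := by
      intro h
      apply hvE'
      rw [mem_kerInter]
      intro i hi
      rw [hE', Finset.mem_insert] at hi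
      rcases hi with rfl | hi
      · exact h
      · exact hvE i hi
    -- normalize sign
    set w : Fin d → ℝ := if (∑ k, a (Sum.inr j) k * v k) < 0 then v else (-1 : ℝ) • v with hw
    have hwneg : ∑ k, a (Sum.inr j) k * w k < 0 := by
      rw [hw]
      split
      · next h => exact h
      · next h =>
        rw [smulfact]
        have : 0 < ∑ k, a (Sum.inr j) k * v k := lt_of_le_of_ne (not_lt.1 h) (Ne.symm ht)
        nlinarith
    have hwE : ∀ i ∈ E, ∑ k, a i k * w k = 0 := by
      intro i hi
      rw [hw]
      split
      · exact hvE i hi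
      · rw [smulfact, hvE i hi]; ring
    have hwv1 : ∀ i : ι₁, ∑ k, a (Sum.inl i) k * w k = 0 := by
      intro i
      apply hwE
      rw [hE]
      exact Finset.mem_union_left _ (Finset.mem_image.2 ⟨i, Finset.mem_univ _, rfl⟩)
    have hwv2 : ∀ j' ∈ J x₀, ∑ k, a (Sum.inr j') k * w k ≤ 0 := by
      intro j' hj'
      by_cases hjj : j' = j
      · subst hjj; exact hwneg.le
      · have hmem : Sum.inr j' ∈ E := by
          rw [hE]
          exact Finset.mem_union_right _
            (Finset.mem_image.2 ⟨j', Finset.mem_erase.2 ⟨hjj, hj'⟩, rfl⟩)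
        rw [hwE _ hmem]
    obtain ⟨ε, hεpos, hx₁Q⟩ := key w hwv1 hwv2
    have hjx₁ := hsub _ hx₁Q hj
    rw [memJ, linfact, (memJ x₀ j).1 hj] at hjx₁
    nlinarith
  -- conclude
  have hdir : (affineSpan ℝ Q).direction = (affineSpan ℝ S).direction := by
    apply le_antisymm
    · rw [direction_affineSpan, direction_affineSpan]
      exact vectorSpan_mono ℝ Set.inter_subset_left
    · rw [direction_affineSpan, direction_affineSpan, vectorSpan_def, vectorSpan_def]
      apply Submodule.span_le.2
      rintro u hu
      rw [Set.mem_vsub] at hu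
      obtain ⟨y, hy, x, hx, rfl⟩ := hu
      rw [hSdef, Set.mem_iInter] at hx hy
      have hv1 : ∀ i : ι₁, ∑ k, a (Sum.inl i) k * (y -ᵥ x) k = 0 := by
        intro i
        rw [show (y -ᵥ x : Fin d → ℝ) = y + (-1 : ℝ) • x by ext k; simp [vsub_eq_sub]; ring]
        rw [linfact]
        have h1 : y ∈ {x : Fin d → ℝ | ∑ k, a (Sum.inl i) k * x k = r (Sum.inl i)} := hy i
        have h2 : x ∈ {x : Fin d → ℝ | ∑ k, a (Sum.inl i) k * x k = r (Sum.inl i)} := hx i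
        rw [Set.mem_setOf_eq] at h1 h2
        rw [h1, h2]; ring
      obtain ⟨ε, hεpos, hx₁Q⟩ := key (y -ᵥ x) hv1
        (fun j' hj' => by rw [hJ₀] at hj'; exact absurd hj' (Finset.notMem_empty _))
      have hmem : ε • (y -ᵥ x) ∈ Submodule.span ℝ (Q -ᵥ Q) := by
        apply Submodule.subset_span
        rw [Set.mem_vsub]
        exact ⟨x₀ + ε • (y -ᵥ x), hx₁Q, x₀, hx₀Q, by ext k; simp [vsub_eq_sub]⟩
      have : (y -ᵥ x) = ε⁻¹ • (ε • (y -ᵥ x)) := by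
        rw [smul_smul, inv_mul_cancel₀ hεpos.ne', one_smul]
      rw [this]
      exact Submodule.smul_mem _ _ hmem
  rw [hdir]
end
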